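/- Let σ(x) := max(x, 0), let γ ∈ (0, 1) and n ≥ 1 an integer, and set γ_n := γ/2^n. Define Δ̄(x) := 2σ(x) − (1/γ_n)σ(x − 1/2 + γ_n) + (1/γ_n)σ(x − 1/2) − (1/γ_n)σ(x − 1 + γ_n) + (1/γ_n − 2)σ(x − 1), and define F(x) := Δ̄^{∘n}(−x/2^n + 1) + x − 1. Then F(x) = ⌊x⌋ for every x ∈ [0, 2^n) with x − ⌊x⌋ > γ. -/
import Mathlib


/-- The ReLU function `σ(x) = max(x, 0)`. -/
noncomputable def relu : ℝ → ℝ := fun x => max x 0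

/-- The ReLU approximation `Δ̄` of the ideal building block, with gap parameter `g`. -/
noncomputable def deltaBar (g : ℝ) : ℝ → ℝ := fun x =>
  2 * relu x - (1 / g) * relu (x - 1 / 2 + g) + (1 / g) * relu (x - 1 / 2)
    - (1 / g) * relu (x - 1 + g) + (1 / g - 2) * relu (x - 1)

lemma relu_of_nonneg {x : ℝ} (h : 0 ≤ x) : relu x = x := max_eq_left h
lemma relu_of_nonpos {x : ℝ} (h : x ≤ 0) : relu x = 0 := max_eq_right h

lemma deltaBar_lo {g v : ℝ} (hg : 0 < g) (hg2 : g ≤ 1/2) (h1 : 0 ≤ v)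
    (h2 : v ≤ 1/2 - g) : deltaBar g v = 2 * v := by
  unfold deltaBar
  rw [relu_of_nonneg h1, relu_of_nonpos (by linarith), relu_of_nonpos (by linarith),
    relu_of_nonpos (by linarith), relu_of_nonpos (by linarith)]
  ring

lemma deltaBar_hi {g v : ℝ} (hg : 0 < g) (h1 : 1/2 ≤ v)
    (h2 : v ≤ 1 - g) : deltaBar g v = 2 * v - 1 := by
  unfold deltaBar
  rw [relu_of_nonneg (by linarith), relu_of_nonneg (by linarith),
    relu_of_nonneg (by linarith), relu_of_nonpos (by linarith),
    relu_of_nonpos (by linarith)]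
  field_simp
  ring

lemma key_step {g s : ℝ} (hg : 0 < g) (hg2 : g ≤ 1/2)
    (H : (g ≤ Int.fract s ∧ Int.fract s < 1/2) ∨ (1/2 + g ≤ Int.fract s)) :
    deltaBar g (1 - Int.fract s) = 1 - Int.fract (2 * s) := by
  have hfs : Int.fract (2 * s) = Int.fract (2 * Int.fract s) := by
    have h : 2 * s = 2 * Int.fract s + ((2 * ⌊s⌋ : ℤ) : ℝ) := by
      push_cast [Int.fract]; ring
    rw [h, Int.fract_add_intCast]
  have hf0 : 0 ≤ Int.fract s := Int.fract_nonneg s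
  have hf1 : Int.fract s < 1 := Int.fract_lt_one s
  rcases H with ⟨h1, h2⟩ | h1
  · have ha : Int.fract (2 * Int.fract s) = 2 * Int.fract s :=
      Int.fract_eq_self.mpr ⟨by linarith, by linarith⟩
    rw [hfs, ha, deltaBar_hi hg (by linarith) (by linarith)]
    ring
  · have hb : Int.fract (2 * Int.fract s) = 2 * Int.fract s - 1 := by
      rw [show 2 * Int.fract s = (2 * Int.fract s - 1) + ((1:ℤ):ℝ) by push_cast; ring,
        Int.fract_add_intCast, Int.fract_eq_self.mpr ⟨by linarith, by linarith⟩]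
      push_cast; ring
    rw [hfs, hb, deltaBar_lo hg hg2 (by linarith) (by linarith)]
    ring

lemma fract_div_pow (x : ℝ) (m : ℕ) :
    Int.fract (x / 2^m) = (((⌊x⌋ % 2^m : ℤ) : ℝ) + Int.fract x) / 2^m := by
  have h2 : (0:ℝ) < 2^m := by positivity
  have hr0 : (0:ℤ) ≤ ⌊x⌋ % 2^m := Int.emod_nonneg _ (by positivity)
  have hr1 : ⌊x⌋ % 2^m < 2^m := Int.emod_lt_of_pos _ (by positivity)
  have hq : (⌊x⌋ : ℤ) = 2^m * (⌊x⌋ / 2^m) + ⌊x⌋ % 2^m := (Int.mul_ediv_add_emod _ _).symm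
  have hc : ((⌊x⌋ : ℤ) : ℝ) = 2^m * ((⌊x⌋ / 2^m : ℤ) : ℝ) + ((⌊x⌋ % 2^m : ℤ) : ℝ) := by
    exact_mod_cast congrArg (Int.cast : ℤ → ℝ) hq
  have key : x / 2^m = (((⌊x⌋ % 2^m : ℤ) : ℝ) + Int.fract x) / 2^m + ((⌊x⌋ / 2^m : ℤ) : ℝ) := by
    rw [Int.fract, hc]
    field_simp
    ring
  rw [key, Int.fract_add_intCast, Int.fract_eq_self.mpr]
  constructor
  · have h1 : (0:ℝ) ≤ ((⌊x⌋ % 2^m : ℤ) : ℝ) := by exact_mod_cast hr0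
    have h2' := Int.fract_nonneg x
    positivity
  · rw [div_lt_one h2]
    have h1 : ((⌊x⌋ % 2^m : ℤ) : ℝ) ≤ 2^m - 1 := by
      have : ((⌊x⌋ % 2^m : ℤ)) ≤ 2^m - 1 := by omega
      calc ((⌊x⌋ % 2^m : ℤ) : ℝ) ≤ ((2^m - 1 : ℤ) : ℝ) := by exact_mod_cast this
        _ = 2^m - 1 := by push_cast; ring
    have := Int.fract_lt_one x
    linarith

lemma fract_cases (γ : ℝ) (hγ0 : 0 < γ) (n m : ℕ) (hm : 1 ≤ m) (hmn : m ≤ n)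
    (x : ℝ) (hf : γ < Int.fract x) :
    (γ/2^n ≤ Int.fract (x/2^m) ∧ Int.fract (x/2^m) < 1/2)
      ∨ (1/2 + γ/2^n ≤ Int.fract (x/2^m)) := by
  rw [fract_div_pow]
  set r : ℤ := ⌊x⌋ % 2^m with hr
  have hr0 : (0:ℤ) ≤ r := Int.emod_nonneg _ (by positivity)
  have hr1 : r < 2^m := Int.emod_lt_of_pos _ (by positivity)
  have h2m : (0:ℝ) < 2^m := by positivity
  have h2n : (0:ℝ) < 2^n := by positivity
  have hmn' : (2:ℝ)^m ≤ 2^n := pow_le_pow_right₀ (by norm_num) hmn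
  have hpow : (2:ℝ)^m = 2^(m-1) * 2 := by
    rw [← pow_succ]; congr 1; omega
  have h2m1 : (0:ℝ) < 2^(m-1) := by positivity
  have hf1 : Int.fract x < 1 := Int.fract_lt_one x
  have hf0 : 0 ≤ Int.fract x := Int.fract_nonneg x
  have hrR0 : (0:ℝ) ≤ (r:ℝ) := by exact_mod_cast hr0
  rcases lt_or_ge r (2^(m-1)) with hcase | hcase
  · left
    have hrR : (r : ℝ) ≤ 2^(m-1) - 1 := by
      have h : r ≤ 2^(m-1) - 1 := by omega
      calc (r:ℝ) ≤ ((2^(m-1) - 1 : ℤ) : ℝ) := by exact_mod_cast h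
        _ = 2^(m-1) - 1 := by push_cast; ring
    constructor
    · have : γ/2^n ≤ ((r:ℝ) + Int.fract x)/2^m := by
        gcongr
        linarith
      linarith
    · rw [div_lt_iff₀ h2m, hpow]
      nlinarith
  · right
    have hrR : (2:ℝ)^(m-1) ≤ (r : ℝ) := by
      calc (2:ℝ)^(m-1) = ((2^(m-1) : ℤ) : ℝ) := by push_cast; ring
        _ ≤ (r:ℝ) := by exact_mod_cast hcase
    have hgn : γ/2^n ≤ γ/2^m := by gcongr
    have : 1/2 + γ/2^m ≤ ((r:ℝ) + Int.fract x)/2^m := by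
      rw [le_div_iff₀ h2m]
      rw [hpow]
      field_simp
      nlinarith
    linarith

lemma iterate_eq (γ : ℝ) (hγ0 : 0 < γ) (hγ1 : γ < 1) (n : ℕ) (hn : 1 ≤ n) (x : ℝ)
    (hx0 : 0 ≤ x) (hx1 : x < 2^n) (hf : γ < Int.fract x) :
    ∀ k, k ≤ n → (deltaBar (γ/2^n))^[k] (1 - x/2^n) = 1 - Int.fract (x/2^(n-k)) := by
  have h2n : (0:ℝ) < 2^n := by positivity
  have hg : 0 < γ/2^n := by positivity
  have hg2 : γ/2^n ≤ 1/2 := by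
    have h1 : (2:ℝ) ≤ 2^n := by
      calc (2:ℝ) = 2^1 := by ring
        _ ≤ 2^n := pow_le_pow_right₀ (by norm_num) hn
    rw [div_le_div_iff₀ h2n (by norm_num)]
    nlinarith
  intro k
  induction k with
  | zero =>
    intro _
    simp only [Function.iterate_zero, id_eq, Nat.sub_zero]
    rw [Int.fract_eq_self.mpr ⟨by positivity, by rw [div_lt_one h2n]; exact hx1⟩]
  | succ k ih =>
    intro hk
    have hkn : k ≤ n := by omega
    set m : ℕ := n - k with hm
    have hm1 : 1 ≤ m := by omega
    rw [Function.iterate_succ_apply', ih hkn,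
      key_step hg hg2 (fract_cases γ hγ0 n m hm1 (by omega) x hf)]
    congr 2
    have hpow : (2:ℝ)^m = 2^(m-1) * 2 := by
      rw [← pow_succ]; congr 1; omega
    have hmk : n - (k+1) = m - 1 := by omega
    rw [hmk, hpow]
    have h2m1 : (0:ℝ) < 2^(m-1) := by positivity
    field_simp

/-- **Floor function approximation.** For `γ ∈ (0,1)`, `n ≥ 1`, and
`γ_n = γ/2^n`, the network `F(x) = Δ̄^{∘n}(-x/2^n + 1) + x - 1` computes the floor
function on all `x ∈ [0, 2^n)` whose fractional part exceeds `γ`. -/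
theorem floor_approx_eq_floor
    (γ : ℝ) (hγ0 : 0 < γ) (hγ1 : γ < 1) (n : ℕ) (hn : 1 ≤ n) (x : ℝ)
    (hx0 : 0 ≤ x) (hx1 : x < 2 ^ n) (hfrac : γ < x - (⌊x⌋ : ℝ)) :
    (deltaBar (γ / 2 ^ n))^[n] (-x / 2 ^ n + 1) + x - 1 = (⌊x⌋ : ℝ) := by
  have hf : γ < Int.fract x := by rw [Int.fract]; exact hfrac
  have h1 : -x / 2^n + 1 = 1 - x/2^n := by ring
  rw [h1, iterate_eq γ hγ0 hγ1 n hn x hx0 hx1 hf n le_rfl]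
  simp only [Nat.sub_self, pow_zero, div_one, Int.fract]
  ring
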